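/- Let n ≥ 1, let F be a Minkowski norm on ℝⁿ, and let α : ℝⁿ \ {0} → ℝ be a C^∞ function that is nonnegative and positively homogeneous of degree 0 (α(t·y) = α(y) for all t > 0 and y ≠ 0). For s ∈ ℝ define H_s : ℝⁿ → ℝ by H_s(y) = (1 + s·α(y)) · F(y) for y ≠ 0 and H_s(0) = 0. Then there exists ε > 0 such that for every s ∈ ℝ with |s| < ε, the function H_s is a Minkowski norm on ℝⁿ. -/

import Mathlib

/-- A Minkowski norm on `ℝⁿ`: a continuous function, vanishing only at the origin, smooth
away from the origin, positively homogeneous of degree one, whose Hessian of `½F²` at each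
`y ≠ 0` is a symmetric positive definite bilinear form. -/
def IsMinkowskiNorm (n : ℕ) (F : (Fin n → ℝ) → ℝ) : Prop :=
  Continuous F ∧
  F 0 = 0 ∧
  (∀ y : Fin n → ℝ, y ≠ 0 → 0 < F y) ∧
  ContDiffOn ℝ (⊤ : ℕ∞) F {y : Fin n → ℝ | y ≠ 0} ∧
  (∀ (t : ℝ) (y : Fin n → ℝ), 0 < t → F (t • y) = t * F y) ∧
  ∀ y : Fin n → ℝ, y ≠ 0 →
    (∀ v w : Fin n → ℝ,
        fderiv ℝ (fderiv ℝ fun z => (1 / 2) * F z ^ 2) y v w =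
          fderiv ℝ (fderiv ℝ fun z => (1 / 2) * F z ^ 2) y w v) ∧
    (∀ v : Fin n → ℝ, v ≠ 0 →
        0 < fderiv ℝ (fderiv ℝ fun z => (1 / 2) * F z ^ 2) y v v)

/-!
For `s = 0` the Hessian of `½ H_s²` is that of `½ F²`, positive on pairs of unit vectors. The
Hessian depends continuously on `(s, y, v)`, so by compactness of the unit sphere it stays positive
on pairs of unit vectors for all small `|s|`; likewise `|s α| < 1` on the sphere for small `|s|`.
Both properties then spread from the sphere to all nonzero vectors by homogeneity: `α` and the
Hessian of the `2`-homogeneous function `½ H_s²` are `0`-homogeneous in the base point, and the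
Hessian is quadratic in `v`.
-/

open Set Filter Topology Function

section Homogeneous

variable {𝕜 E G : Type*} [NontriviallyNormedField 𝕜] [NormedAddCommGroup E] [NormedSpace 𝕜 E]
  [NormedAddCommGroup G] [NormedSpace 𝕜 G]

theorem fderiv_smul_eq_pow_smul_fderiv {g : E → G} {t : 𝕜} {k : ℕ} {y : E}
    (hg : ∀ z ≠ 0, g (t • z) = t ^ (k + 1) • g z) (ht : t ≠ 0) (hy : y ≠ 0) :
    fderiv 𝕜 g (t • y) = t ^ k • fderiv 𝕜 g y := by
  have hcomp : (g <| t • ·) =ᶠ[𝓝 y] t ^ (k + 1) • g := by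
    filter_upwards [isOpen_ne.mem_nhds hy] with z hz using hg z hz
  -- Both `fderiv_comp_smul` and `fderiv_const_smul_field` hold without differentiability of `g`.
  have key : t • fderiv 𝕜 g (t • y) = t • t ^ k • fderiv 𝕜 g y := by
    rw [← fderiv_comp_smul, hcomp.fderiv_eq, fderiv_const_smul_field, smul_smul, pow_succ']
    rfl
  exact smul_right_injective _ ht key

theorem fderiv_fderiv_smul_eq_of_homogeneous_two {g : E → G} {t : 𝕜} {y : E}
    (hg : ∀ z ≠ 0, g (t • z) = t ^ 2 • g z) (ht : t ≠ 0) (hy : y ≠ 0) :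
    fderiv 𝕜 (fderiv 𝕜 g) (t • y) = fderiv 𝕜 (fderiv 𝕜 g) y := by
  have hDg : ∀ z ≠ 0, fderiv 𝕜 g (t • z) = t ^ (0 + 1) • fderiv 𝕜 g z := fun z hz ↦ by
    simpa using fderiv_smul_eq_pow_smul_fderiv (k := 1) hg ht hz
  simpa using fderiv_smul_eq_pow_smul_fderiv (g := fderiv 𝕜 g) hDg ht hy

end Homogeneous

theorem forall_ne_zero_of_forall_mem_sphere {E : Type*} [NormedAddCommGroup E] [NormedSpace ℝ E]
    {P : E → Prop} (hP : ∀ t : ℝ, 0 < t → ∀ y ≠ 0, P y → P (t • y))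
    (h : ∀ y ∈ Metric.sphere (0 : E) 1, P y) (y : E) (hy : y ≠ 0) : P y := by
  have hy' : 0 < ‖y‖ := norm_pos_iff.mpr hy
  rw [← smul_inv_smul₀ hy'.ne' y]
  refine hP _ hy' _ (smul_ne_zero (inv_ne_zero hy'.ne') hy) (h _ ?_)
  rw [mem_sphere_zero_iff_norm, norm_smul, norm_inv, norm_norm, inv_mul_cancel₀ hy'.ne']

section ParametricHessian

variable {𝕜 P E G : Type*} [NontriviallyNormedField 𝕜] [NormedAddCommGroup P] [NormedSpace 𝕜 P]
  [NormedAddCommGroup E] [NormedSpace 𝕜 E] [NormedAddCommGroup G] [NormedSpace 𝕜 G]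

theorem ContDiffAt.fderiv_uncurry {f : P → E → G} {q : P × E} {m n : WithTop ℕ∞}
    (hf : ContDiffAt 𝕜 n (uncurry f) q) (hmn : m + 1 ≤ n) :
    ContDiffAt 𝕜 m (fun q : P × E ↦ fderiv 𝕜 (f q.1) q.2) q :=
  ContDiffAt.fderiv (f := fun q : P × E ↦ f q.1)
    (hf.comp (g := uncurry f) (q, q.2) (contDiffAt_fst.fst.prodMk contDiffAt_snd))
    contDiffAt_snd hmn

theorem ContDiffOn.continuousOn_fderiv_fderiv_uncurry {f : P → E → G} {U : Set (P × E)}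
    (hf : ContDiffOn 𝕜 2 (uncurry f) U) (hU : IsOpen U) :
    ContinuousOn (fun q : P × E ↦ fderiv 𝕜 (fderiv 𝕜 (f q.1)) q.2) U := by
  have hDf : ContDiffOn 𝕜 1 (fun q : P × E ↦ fderiv 𝕜 (f q.1) q.2) U := fun q hq ↦
    ((hf.contDiffAt (hU.mem_nhds hq)).fderiv_uncurry (by norm_num)).contDiffWithinAt
  refine fun q hq ↦ ContinuousAt.continuousWithinAt ?_
  exact (ContDiffAt.fderiv_uncurry (f := fun p z ↦ fderiv 𝕜 (f p) z)
    (hDf.contDiffAt (hU.mem_nhds hq)) (by norm_num) : ContDiffAt 𝕜 0 _ q).continuousAt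

end ParametricHessian

theorem fderiv_fderiv_apply_pos_of_forall_mem_sphere {E : Type*} [NormedAddCommGroup E]
    [NormedSpace ℝ E] {g : E → ℝ} (hg : ∀ t : ℝ, 0 < t → ∀ z ≠ 0, g (t • z) = t ^ 2 * g z)
    (hpos : ∀ y ∈ Metric.sphere (0 : E) 1, ∀ v ∈ Metric.sphere (0 : E) 1,
      0 < fderiv ℝ (fderiv ℝ g) y v v)
    {y v : E} (hy : y ≠ 0) (hv : v ≠ 0) : 0 < fderiv ℝ (fderiv ℝ g) y v v := by
  refine forall_ne_zero_of_forall_mem_sphere (P := fun y ↦ ∀ v ≠ 0, 0 < fderiv ℝ (fderiv ℝ g) y v v)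
    ?_ ?_ y hy v hv
  · intro t ht y hy h
    rwa [fderiv_fderiv_smul_eq_of_homogeneous_two (hg t ht) ht.ne' hy]
  · intro y hy
    refine forall_ne_zero_of_forall_mem_sphere (fun t ht v _ h ↦ ?_) (hpos y hy)
    simp only [map_smul, smul_apply, smul_eq_mul, ← mul_assoc]
    positivity

section Perturbation

variable {E : Type*} [NormedAddCommGroup E] {F α : E → ℝ}

theorem contDiffOn_uncurry_half_sq_perturbation [NormedSpace ℝ E] {k : WithTop ℕ∞}
    (hF : ContDiffOn ℝ k F {y | y ≠ 0}) (hα : ContDiffOn ℝ k α {y | y ≠ 0}) :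
    ContDiffOn ℝ k (uncurry fun (s : ℝ) z ↦ 1 / 2 * ((1 + s * α z) * F z) ^ 2)
      {q : ℝ × E | q.2 ≠ 0} := by
  have hsnd : MapsTo Prod.snd {q : ℝ × E | q.2 ≠ 0} {y | y ≠ 0} := fun _ hq ↦ hq
  exact contDiffOn_const.mul (((contDiffOn_const.add (contDiffOn_fst.mul
    (hα.comp contDiffOn_snd hsnd))).mul (hF.comp contDiffOn_snd hsnd)).pow 2)

theorem continuous_perturbation_of_abs_mul_lt_one {s : ℝ} (hF : Continuous F) (hF0 : F 0 = 0)
    (hα : ContinuousOn α {y | y ≠ 0}) (hsα : ∀ y ≠ 0, |s * α y| < 1) :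
    Continuous fun y ↦ (1 + s * α y) * F y := by
  have hle : ∀ y, ‖(1 + s * α y) * F y‖ ≤ 2 * ‖F y‖ := by
    intro y
    rcases eq_or_ne y 0 with rfl | hy
    · simp [hF0]
    · have := abs_lt.mp (hsα y hy)
      rw [norm_mul]
      gcongr
      rw [Real.norm_eq_abs, abs_le]
      constructor <;> linarith
  refine continuous_iff_continuousAt.mpr fun y ↦ ?_
  rcases eq_or_ne y 0 with rfl | hy
  · have h2F : Tendsto (fun y ↦ 2 * ‖F y‖) (𝓝 0) (𝓝 0) := by
      simpa [hF0] using ((hF.tendsto 0).norm).const_mul 2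
    simpa [ContinuousAt, hF0] using squeeze_zero_norm hle h2F
  · exact (continuousAt_const.add (continuousAt_const.mul
      (hα.continuousAt (isOpen_ne.mem_nhds hy)))).mul hF.continuousAt

theorem eventually_forall_mem_sphere_abs_mul_lt_one [ProperSpace E]
    (hα : ContinuousOn α {y | y ≠ 0}) :
    ∀ᶠ s in 𝓝 (0 : ℝ), ∀ y ∈ Metric.sphere (0 : E) 1, |s * α y| < 1 := by
  refine (isCompact_sphere 0 1).eventually_forall_of_forall_eventually fun y hy ↦ ?_
  have hαy : ContinuousAt α y :=
    hα.continuousAt (isOpen_ne.mem_nhds (ne_zero_of_mem_unit_sphere ⟨y, hy⟩))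
  refine ContinuousAt.eventually_lt (g := fun _ ↦ 1) ?_ continuousAt_const (by simp)
  exact (continuousAt_fst.mul (hαy.comp continuousAt_snd)).abs

theorem eventually_forall_mem_sphere_fderiv_fderiv_pos [NormedSpace ℝ E] [ProperSpace E]
    (hF : ContDiffOn ℝ 2 F {y | y ≠ 0}) (hα : ContDiffOn ℝ 2 α {y | y ≠ 0})
    (hFpos : ∀ y ∈ Metric.sphere (0 : E) 1, ∀ v ∈ Metric.sphere (0 : E) 1,
      0 < fderiv ℝ (fderiv ℝ fun z ↦ 1 / 2 * F z ^ 2) y v v) :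
    ∀ᶠ s in 𝓝 (0 : ℝ), ∀ y ∈ Metric.sphere (0 : E) 1, ∀ v ∈ Metric.sphere (0 : E) 1,
      0 < fderiv ℝ (fderiv ℝ fun z ↦ 1 / 2 * ((1 + s * α z) * F z) ^ 2) y v v := by
  have hHess := (contDiffOn_uncurry_half_sq_perturbation hF hα).continuousOn_fderiv_fderiv_uncurry
    (isOpen_ne.preimage continuous_snd)
  have hK := (isCompact_sphere (0 : E) 1).prod (isCompact_sphere (0 : E) 1)
  have hnear : ∀ p ∈ Metric.sphere (0 : E) 1 ×ˢ Metric.sphere (0 : E) 1, ∀ᶠ q in 𝓝 ((0 : ℝ), p),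
      0 < fderiv ℝ (fderiv ℝ fun z ↦ 1 / 2 * ((1 + q.1 * α z) * F z) ^ 2) q.2.1 q.2.2 q.2.2 := by
    intro p hp
    have hcont : ContinuousAt (fun q : ℝ × E ↦
        fderiv ℝ (fderiv ℝ fun z ↦ 1 / 2 * ((1 + q.1 * α z) * F z) ^ 2) q.2) (0, p.1) :=
      hHess.continuousAt ((isOpen_ne.preimage continuous_snd).mem_nhds
        (ne_zero_of_mem_unit_sphere ⟨_, hp.1⟩))
    refine ContinuousAt.eventually_lt continuousAt_const
      (((hcont.comp (f := fun q : ℝ × E × E ↦ (q.1, q.2.1)) (x := (0, p))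
        (continuousAt_fst.prodMk continuousAt_snd.fst)).clm_apply
        continuousAt_snd.snd).clm_apply continuousAt_snd.snd) ?_
    simpa using hFpos p.1 hp.1 p.2 hp.2
  filter_upwards [hK.eventually_forall_of_forall_eventually (P := fun s p ↦
    0 < fderiv ℝ (fderiv ℝ fun z ↦ 1 / 2 * ((1 + s * α z) * F z) ^ 2) p.1 p.2 p.2) hnear]
    with s hs y hy v hv
  exact hs (y, v) ⟨hy, hv⟩

end Perturbation

theorem IsMinkowskiNorm.perturbation {n : ℕ} {F α : (Fin n → ℝ) → ℝ} (hF : IsMinkowskiNorm n F)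
    (hα : ContDiffOn ℝ (⊤ : ℕ∞) α {y | y ≠ 0})
    (hα_homog : ∀ (t : ℝ) (y : Fin n → ℝ), 0 < t → y ≠ 0 → α (t • y) = α y) {s : ℝ}
    (hsα : ∀ y ∈ Metric.sphere (0 : Fin n → ℝ) 1, |s * α y| < 1)
    (hsHess : ∀ y ∈ Metric.sphere (0 : Fin n → ℝ) 1, ∀ v ∈ Metric.sphere (0 : Fin n → ℝ) 1,
      0 < fderiv ℝ (fderiv ℝ fun z ↦ 1 / 2 * ((1 + s * α z) * F z) ^ 2) y v v) :
    IsMinkowskiNorm n fun y ↦ (1 + s * α y) * F y := by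
  obtain ⟨hFc, hF0, hFpos, hFsm, hFhom, -⟩ := hF
  have hsα' : ∀ y ≠ 0, |s * α y| < 1 :=
    forall_ne_zero_of_forall_mem_sphere (fun t ht y hy h ↦ by rwa [hα_homog t y ht hy]) hsα
  have hHsm : ContDiffOn ℝ (⊤ : ℕ∞) (fun y ↦ (1 + s * α y) * F y) {y | y ≠ 0} :=
    (contDiffOn_const.add (contDiffOn_const.mul hα)).mul hFsm
  have hhom : ∀ (t : ℝ) (y : Fin n → ℝ), 0 < t → y ≠ 0 →
      (1 + s * α (t • y)) * F (t • y) = t * ((1 + s * α y) * F y) := by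
    intro t y ht hy
    rw [hα_homog t y ht hy, hFhom t y ht]
    ring
  refine ⟨continuous_perturbation_of_abs_mul_lt_one hFc hF0 hα.continuousOn hsα', by simp [hF0],
    fun y hy ↦ ?_, hHsm, fun t y ht ↦ ?_, fun y hy ↦ ⟨?_, fun v hv ↦ ?_⟩⟩
  · have := abs_lt.mp (hsα' y hy)
    exact mul_pos (by linarith) (hFpos y hy)
  · rcases eq_or_ne y 0 with rfl | hy
    · simp [hF0]
    · exact hhom t y ht hy
  · have hHsm2 : ContDiffOn ℝ (⊤ : ℕ∞) (fun z ↦ 1 / 2 * ((1 + s * α z) * F z) ^ 2) {y | y ≠ 0} :=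
      contDiffOn_const.mul (hHsm.pow 2)
    exact (hHsm2.contDiffAt (isOpen_ne.mem_nhds hy)).isSymmSndFDerivAt
      (by rw [minSmoothness_of_isRCLikeNormedField]; exact WithTop.coe_le_coe.mpr le_top)
  · refine fderiv_fderiv_apply_pos_of_forall_mem_sphere (fun t ht z hz ↦ ?_) hsHess hy hv
    simp only [hhom t z ht hz]
    ring

theorem perturbed_minkowski_norm_general (n : ℕ)
    (F : (Fin n → ℝ) → ℝ) (hF : IsMinkowskiNorm n F)
    (α : (Fin n → ℝ) → ℝ)
    (hα_smooth : ContDiffOn ℝ (⊤ : ℕ∞) α {y : Fin n → ℝ | y ≠ 0})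
    (hα_homog : ∀ (t : ℝ) (y : Fin n → ℝ), 0 < t → y ≠ 0 → α (t • y) = α y) :
    ∃ ε > 0, ∀ s : ℝ, |s| < ε →
      IsMinkowskiNorm n fun y => (1 + s * α y) * F y := by
  obtain ⟨-, -, -, hFsm, -, hFhess⟩ := id hF
  have h2 : (2 : WithTop ℕ∞) ≤ (⊤ : ℕ∞) := WithTop.coe_le_coe.mpr le_top
  have hFhess_sphere : ∀ y ∈ Metric.sphere (0 : Fin n → ℝ) 1, ∀ v ∈ Metric.sphere (0 : Fin n → ℝ) 1,
      0 < fderiv ℝ (fderiv ℝ fun z ↦ 1 / 2 * F z ^ 2) y v v := fun y hy v hv ↦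
    (hFhess y (ne_zero_of_mem_unit_sphere ⟨y, hy⟩)).2 v (ne_zero_of_mem_unit_sphere ⟨v, hv⟩)
  obtain ⟨ε, hε, hsmall⟩ := Metric.eventually_nhds_iff.mp
    ((eventually_forall_mem_sphere_abs_mul_lt_one hα_smooth.continuousOn).and
      (eventually_forall_mem_sphere_fderiv_fderiv_pos (hFsm.of_le h2) (hα_smooth.of_le h2)
        hFhess_sphere))
  refine ⟨ε, hε, fun s hs ↦ ?_⟩
  obtain ⟨hsα, hsHess⟩ := hsmall (by rwa [Real.dist_eq, sub_zero])
  exact hF.perturbation hα_smooth hα_homog hsα hsHess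

/-- Perturbing a Minkowski norm `F` by `H_s(y) = (1 + s α(y)) F(y)`,
where `α` is smooth away from `0`, nonnegative and positively homogeneous of degree `0`,
yields a Minkowski norm for all sufficiently small `|s|`. -/
theorem perturbed_minkowski_norm (n : ℕ) (hn : 1 ≤ n)
    (F : (Fin n → ℝ) → ℝ) (hF : IsMinkowskiNorm n F)
    (α : (Fin n → ℝ) → ℝ)
    (hα_smooth : ContDiffOn ℝ (⊤ : ℕ∞) α {y : Fin n → ℝ | y ≠ 0})
    (hα_nonneg : ∀ y : Fin n → ℝ, y ≠ 0 → 0 ≤ α y)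
    (hα_homog : ∀ (t : ℝ) (y : Fin n → ℝ), 0 < t → y ≠ 0 → α (t • y) = α y) :
    ∃ ε > 0, ∀ s : ℝ, |s| < ε →
      IsMinkowskiNorm n fun y => (1 + s * α y) * F y :=
  perturbed_minkowski_norm_general n F hF α hα_smooth hα_homog
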